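/- For every R > 0, the space ℰℋ_{[0,R]}^{<ω} of isometry classes of nonempty finite subsets of the interval [0,R], endowed with the Euclidean–Hausdorff distance, cannot be bi-Lipschitz embedded into any finite-dimensional Hilbert space: for every n ∈ ℕ there is no map ψ from the nonempty finite subsets of [0,R] to Euclidean n-space and constants a, b > 0 with a·d_EH(X,Y) ≤ ‖ψ(X) − ψ(Y)‖ ≤ b·d_EH(X,Y) for all nonempty finite X, Y ⊆ [0,R]. -/
import Mathlib
open Metric MeasureTheory
open scoped ENNReal NNReal


lemma isometry_real_form (f : ℝ → ℝ) (hf : Isometry f) :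
    ∃ ε c : ℝ, (ε = 1 ∨ ε = -1) ∧ ∀ x, f x = c + ε * x := by
  have hsq : ∀ x y : ℝ, (f x - f y)^2 = (x - y)^2 := fun x y => by
    rw [← sq_abs (f x - f y), ← sq_abs (x - y)]
    congr 1
    simpa [Real.dist_eq] using hf.dist_eq x y
  have hε2 : (f 1 - f 0) * (f 1 - f 0) = 1 := by linear_combination hsq 1 0
  refine ⟨f 1 - f 0, f 0, mul_self_eq_one_iff.mp hε2, fun x => ?_⟩
  have H3 : (f 1 - f 0) * (f x - f 0) = x := by
    linear_combination (hsq x 0 - hsq x 1) / 2 + hε2 / 2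
  linear_combination (f 1 - f 0) * H3 - (f x - f 0) * hε2

noncomputable def dEH (A B : Set ℝ) : ℝ :=
  sInf {d : ℝ | ∃ f : ℝ → ℝ, Isometry f ∧ Function.Surjective f ∧
    d = hausdorffDist A (f '' B)}

def posSet (m : ℕ) (u : Finset ℕ) : Finset ℕ := {0, 1, m+3} ∪ u.image (· + 2)

noncomputable def gridSet (R : ℝ) (m : ℕ) (u : Finset ℕ) : Set ℝ :=
  ↑((posSet m u).image (fun p : ℕ => R / (m+3) * (p : ℝ)))

lemma mem_posSet {m : ℕ} {u : Finset ℕ} {p : ℕ} :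
    p ∈ posSet m u ↔ p = 0 ∨ p = 1 ∨ p = m+3 ∨ ∃ j ∈ u, j + 2 = p := by
  simp [posSet]

lemma zero_mem_posSet (m : ℕ) (u : Finset ℕ) : 0 ∈ posSet m u := mem_posSet.mpr (Or.inl rfl)
lemma one_mem_posSet (m : ℕ) (u : Finset ℕ) : 1 ∈ posSet m u := mem_posSet.mpr (Or.inr (Or.inl rfl))
lemma top_mem_posSet (m : ℕ) (u : Finset ℕ) : m+3 ∈ posSet m u :=
  mem_posSet.mpr (Or.inr (Or.inr (Or.inl rfl)))

lemma posSet_le {m : ℕ} {u : Finset ℕ} (hu : u ⊆ Finset.range m) {p : ℕ}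
    (hp : p ∈ posSet m u) : p ≤ m + 3 := by
  rcases mem_posSet.mp hp with h | h | h | ⟨j, hj, h⟩
  · omega
  · omega
  · omega
  · have := Finset.mem_range.mp (hu hj); omega

lemma two_mem_posSet_iff {m : ℕ} {u : Finset ℕ} {j : ℕ} (hj : j < m) :
    j + 2 ∈ posSet m u ↔ j ∈ u := by
  constructor
  · intro h
    rcases mem_posSet.mp h with h | h | h | ⟨i, hi, h⟩
    · omega
    · omega
    · omega
    · have : i = j := by omega
      exact this ▸ hi
  · intro h; exact mem_posSet.mpr (Or.inr (Or.inr (Or.inr ⟨j, h, rfl⟩)))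

lemma mid_not_mem_posSet {m : ℕ} {u : Finset ℕ} (hu : u ⊆ Finset.range m) :
    m + 2 ∉ posSet m u := by
  intro h
  rcases mem_posSet.mp h with h | h | h | ⟨j, hj, h⟩
  · omega
  · omega
  · omega
  · have := Finset.mem_range.mp (hu hj); omega

lemma posSet_inj {m : ℕ} {u v : Finset ℕ} (hu : u ⊆ Finset.range m)
    (hv : v ⊆ Finset.range m) (h : posSet m u = posSet m v) : u = v := by
  ext j
  constructor
  · intro hj
    have hjm := Finset.mem_range.mp (hu hj)
    exact (two_mem_posSet_iff hjm).mp (h ▸ (two_mem_posSet_iff hjm).mpr hj)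
  · intro hj
    have hjm := Finset.mem_range.mp (hv hj)
    exact (two_mem_posSet_iff hjm).mp (h.symm ▸ (two_mem_posSet_iff hjm).mpr hj)

lemma mem_gridSet {R : ℝ} {m : ℕ} {u : Finset ℕ} {x : ℝ} :
    x ∈ gridSet R m u ↔ ∃ p ∈ posSet m u, R / (m+3) * (p : ℝ) = x := by
  simp [gridSet]

lemma gridSet_finite (R : ℝ) (m : ℕ) (u : Finset ℕ) : (gridSet R m u).Finite :=
  Finset.finite_toSet _

lemma gridSet_nonempty (R : ℝ) (m : ℕ) (u : Finset ℕ) : (gridSet R m u).Nonempty :=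
  ⟨0, mem_gridSet.mpr ⟨0, zero_mem_posSet m u, by simp⟩⟩

lemma gridSet_subset {R : ℝ} (hR : 0 < R) {m : ℕ} {u : Finset ℕ}
    (hu : u ⊆ Finset.range m) : gridSet R m u ⊆ Set.Icc 0 R := by
  intro x hx
  obtain ⟨p, hp, rfl⟩ := mem_gridSet.mp hx
  have hm3 : (0:ℝ) < (m:ℝ) + 3 := by positivity
  have hple : (p:ℝ) ≤ (m:ℝ) + 3 := by
    have := posSet_le hu hp; exact_mod_cast by exact_mod_cast (by push_cast; exact_mod_cast this : (p:ℝ) ≤ (m+3 : ℕ))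
  constructor
  · positivity
  · rw [div_mul_eq_mul_div, div_le_iff₀ hm3]
    nlinarith [hple]

lemma int_abs_lt_one {z : ℤ} (h : |(z:ℝ)| < 1) : z = 0 := by
  by_contra hz
  have : (1:ℝ) ≤ |(z:ℝ)| := by
    have := Int.one_le_abs (by omega : z ≠ 0)
    calc (1:ℝ) ≤ (|z| : ℤ) := by exact_mod_cast this
    _ = |(z:ℝ)| := by push_cast; ring
  linarith

lemma dEH_nonneg_mem {A B : Set ℝ} {d : ℝ}
    (hd : d ∈ {d : ℝ | ∃ f : ℝ → ℝ, Isometry f ∧ Function.Surjective f ∧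
      d = hausdorffDist A (f '' B)}) : 0 ≤ d := by
  obtain ⟨f, -, -, rfl⟩ := hd; exact hausdorffDist_nonneg

lemma dEH_le_hausdorffDist (A B : Set ℝ) : dEH A B ≤ hausdorffDist A B := by
  apply csInf_le ⟨0, fun d hd => dEH_nonneg_mem hd⟩
  exact ⟨id, isometry_id, Function.surjective_id, by simp⟩

lemma grid_dEH_lower {R : ℝ} (hR : 0 < R) {m : ℕ} {u v : Finset ℕ}
    (hu : u ⊆ Finset.range m) (hv : v ⊆ Finset.range m) (huv : u ≠ v) :
    R / (m+3) / 2 ≤ dEH (gridSet R m u) (gridSet R m v) := by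
  have hm3 : (0:ℝ) < (m:ℝ)+3 := by positivity
  set δ := R / ((m:ℝ)+3) with hδdef
  have hδ : 0 < δ := by positivity
  apply le_csInf
  · exact ⟨hausdorffDist (gridSet R m u) (id '' gridSet R m v), id, isometry_id,
      Function.surjective_id, rfl⟩
  rintro d ⟨f, hf, -, rfl⟩
  by_contra hlt
  push_neg at hlt
  obtain ⟨ε, c, hε, hform⟩ := isometry_real_form f hf
  have hε2 : ε * ε = 1 := by rcases hε with h | h <;> rw [h] <;> norm_num
  have hA := gridSet_nonempty R m u
  have hB := gridSet_nonempty R m v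
  have hedist : EMetric.hausdorffEdist (gridSet R m u) (f '' gridSet R m v) ≠ ⊤ :=
    Metric.hausdorffEdist_ne_top_of_nonempty_of_bounded hA (hB.image f)
      (gridSet_finite R m u).isBounded ((gridSet_finite R m v).image f).isBounded
  -- both-direction matching
  have dir1 : ∀ p ∈ posSet m u, ∃ q ∈ posSet m v, |δ*p - ε*(δ*q) - c| < δ/2 := by
    intro p hp
    have hx : δ*(p:ℝ) ∈ gridSet R m u := mem_gridSet.mpr ⟨p, hp, rfl⟩
    obtain ⟨y, hy, hdist⟩ := exists_dist_lt_of_hausdorffDist_lt hx hlt hedist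
    obtain ⟨b, hb, rfl⟩ := hy
    obtain ⟨q, hq, rfl⟩ := mem_gridSet.mp hb
    refine ⟨q, hq, ?_⟩
    rw [Real.dist_eq, hform] at hdist
    calc |δ*(p:ℝ) - ε*(δ*(q:ℝ)) - c| = |δ*(p:ℝ) - (c + ε*(δ*(q:ℝ)))| := by ring_nf
    _ < δ/2 := hdist
  have dir2 : ∀ q ∈ posSet m v, ∃ p ∈ posSet m u, |δ*p - ε*(δ*q) - c| < δ/2 := by
    intro q hq
    have hy : f (δ*(q:ℝ)) ∈ f '' gridSet R m v :=
      Set.mem_image_of_mem f (mem_gridSet.mpr ⟨q, hq, rfl⟩)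
    obtain ⟨x, hx, hdist⟩ := exists_dist_lt_of_hausdorffDist_lt' hy hlt hedist
    obtain ⟨p, hp, rfl⟩ := mem_gridSet.mp hx
    refine ⟨p, hp, ?_⟩
    rw [Real.dist_eq, hform] at hdist
    calc |δ*(p:ℝ) - ε*(δ*(q:ℝ)) - c| = |δ*(p:ℝ) - (c + ε*(δ*(q:ℝ)))| := by ring_nf
    _ < δ/2 := hdist
  -- uniqueness of the shift
  have huniq : ∀ p q p' q' : ℕ, |δ*p - ε*(δ*q) - c| < δ/2 → |δ*p' - ε*(δ*q') - c| < δ/2 →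
      (p:ℝ) - ε*q = (p':ℝ) - ε*q' := by
    intro p q p' q' h1 h2
    have habs : |δ*((p:ℝ) - ε*q) - δ*((p':ℝ) - ε*q')| < δ := by
      have := abs_sub (δ*(p:ℝ) - ε*(δ*q) - c) (δ*(p':ℝ) - ε*(δ*q') - c)
      calc |δ*((p:ℝ) - ε*q) - δ*((p':ℝ) - ε*q')|
          = |(δ*(p:ℝ) - ε*(δ*q) - c) - (δ*(p':ℝ) - ε*(δ*q') - c)| := by ring_nf
      _ ≤ |δ*(p:ℝ) - ε*(δ*q) - c| + |δ*(p':ℝ) - ε*(δ*q') - c| := abs_sub _ _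
      _ < δ := by linarith
    have habs2 : |((p:ℝ) - ε*q) - ((p':ℝ) - ε*q')| < 1 := by
      rw [show δ*((p:ℝ) - ε*q) - δ*((p':ℝ) - ε*q')
            = δ*(((p:ℝ) - ε*q) - ((p':ℝ) - ε*q')) by ring, abs_mul, abs_of_pos hδ] at habs
      nlinarith [abs_nonneg (((p:ℝ) - ε*q) - ((p':ℝ) - ε*q'))]
    rcases hε with h1 | h1 <;> subst h1
    · have hz : ((p:ℤ) - q - p' + q') = 0 := by
        apply int_abs_lt_one
        convert habs2 using 2 <;> push_cast <;> ring
      have : ((p:ℝ) - q - p' + q') = 0 := by exact_mod_cast hz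
      linarith [this]
    · have hz : ((p:ℤ) + q - p' - q') = 0 := by
        apply int_abs_lt_one
        convert habs2 using 2 <;> push_cast <;> ring
      have : ((p:ℝ) + q - p' - q') = 0 := by exact_mod_cast hz
      linarith [this]
  -- base matched pair
  obtain ⟨q0, hq0, hP0⟩ := dir1 0 (zero_mem_posSet m u)
  rcases hε with h1 | h1 <;> subst h1
  · -- ε = 1 : translation
    obtain ⟨p1, hp1, hP1⟩ := dir2 0 (zero_mem_posSet m v)
    have e1 : (p1:ℝ) - 1*(0:ℕ) = ((0:ℕ):ℝ) - 1*q0 := huniq p1 0 0 q0 hP1 hP0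
    have hq00 : (q0:ℝ) = 0 := by
      have hp1n : (0:ℝ) ≤ (p1:ℝ) := Nat.cast_nonneg _
      have hq0n : (0:ℝ) ≤ (q0:ℝ) := Nat.cast_nonneg _
      push_cast at e1
      linarith
    have hpos : posSet m u = posSet m v := by
      ext p
      constructor
      · intro hp
        obtain ⟨q, hq, hPq⟩ := dir1 p hp
        have e2 : (p:ℝ) - 1*q = ((0:ℕ):ℝ) - 1*q0 := huniq p q 0 q0 hPq hP0
        have : (p:ℝ) = (q:ℝ) := by push_cast at e2; linarith [hq00]
        rwa [Nat.cast_inj.mp this]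
      · intro hp
        obtain ⟨q, hq, hPq⟩ := dir2 p hp
        have e2 : (q:ℝ) - 1*p = ((0:ℕ):ℝ) - 1*q0 := huniq q p 0 q0 hPq hP0
        have : (q:ℝ) = (p:ℝ) := by push_cast at e2; linarith [hq00]
        rwa [← Nat.cast_inj.mp this]
    exact huv (posSet_inj hu hv hpos)
  · -- ε = -1 : reflection
    obtain ⟨q1, hq1, hPm⟩ := dir1 (m+3) (top_mem_posSet m u)
    have e1 : ((m+3:ℕ):ℝ) - (-1)*q1 = ((0:ℕ):ℝ) - (-1)*q0 := huniq (m+3) q1 0 q0 hPm hP0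
    have hq0le : (q0:ℝ) ≤ (m:ℝ)+3 := by
      have := posSet_le hv hq0
      have : (q0:ℝ) ≤ ((m+3:ℕ):ℝ) := Nat.cast_le.mpr this
      push_cast at this; linarith
    have hq1n : (0:ℝ) ≤ (q1:ℝ) := Nat.cast_nonneg _
    have hQ0 : (q0:ℝ) = (m:ℝ)+3 := by push_cast at e1; linarith
    obtain ⟨p2, hp2, hP2⟩ := dir2 1 (one_mem_posSet m v)
    have e2 : (p2:ℝ) - (-1)*((1:ℕ):ℝ) = ((0:ℕ):ℝ) - (-1)*q0 := huniq p2 1 0 q0 hP2 hP0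
    have : (p2:ℝ) = ((m+2:ℕ):ℝ) := by push_cast at e2 ⊢; linarith
    rw [Nat.cast_inj.mp this] at hp2
    exact mid_not_mem_posSet hu hp2


lemma packing_bound (n : ℕ) (s : Finset (EuclideanSpace ℝ (Fin n))) (r ρ : ℝ)
    (hr : 0 < r) (hρ : 0 ≤ ρ) (c : EuclideanSpace ℝ (Fin n))
    (hball : ∀ x ∈ s, dist x c ≤ ρ)
    (hsep : ∀ x ∈ s, ∀ y ∈ s, x ≠ y → r ≤ dist x y) :
    (s.card : ℝ) * (r/4)^n ≤ (ρ + r/2)^n := by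
  set μ : Measure (EuclideanSpace ℝ (Fin n)) := volume with hμ
  have hdisj : (↑s : Set (EuclideanSpace ℝ (Fin n))).PairwiseDisjoint
      (fun x => closedBall x (r/4)) := by
    intro x hx y hy hxy
    exact closedBall_disjoint_closedBall (by linarith [hsep x hx y hy hxy])
  have hsum : ∑ x ∈ s, μ (closedBall x (r/4)) = μ (⋃ x ∈ s, closedBall x (r/4)) :=
    (measure_biUnion_finset hdisj (fun _ _ => measurableSet_closedBall)).symm
  have hsub : (⋃ x ∈ s, closedBall x (r/4)) ⊆ closedBall c (ρ + r/2) := by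
    refine Set.iUnion₂_subset fun x hx z hz => ?_
    have := hball x hx
    simp only [mem_closedBall] at hz ⊢
    calc dist z c ≤ dist z x + dist x c := dist_triangle _ _ _
    _ ≤ ρ + r/2 := by linarith
  have hfr : Module.finrank ℝ (EuclideanSpace ℝ (Fin n)) = n :=
    finrank_euclideanSpace_fin
  have hballmeas : ∀ x : EuclideanSpace ℝ (Fin n),
      μ (closedBall x (r/4)) = ENNReal.ofReal ((r/4)^n) * μ (ball 0 1) := by
    intro x
    rw [μ.addHaar_closedBall x (by positivity : (0:ℝ) ≤ r/4), hfr]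
  have hbig : μ (closedBall c (ρ + r/2)) = ENNReal.ofReal ((ρ + r/2)^n) * μ (ball 0 1) := by
    rw [μ.addHaar_closedBall c (by positivity : (0:ℝ) ≤ ρ + r/2), hfr]
  have hK0 : μ (ball 0 1) ≠ 0 := (measure_ball_pos μ 0 one_pos).ne'
  have hKtop : μ (ball 0 1) ≠ ⊤ := measure_ball_lt_top.ne
  have hle : (s.card : ℝ≥0∞) * (ENNReal.ofReal ((r/4)^n) * μ (ball 0 1))
      ≤ ENNReal.ofReal ((ρ + r/2)^n) * μ (ball 0 1) := by
    calc (s.card : ℝ≥0∞) * (ENNReal.ofReal ((r/4)^n) * μ (ball 0 1))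
        = ∑ x ∈ s, ENNReal.ofReal ((r/4)^n) * μ (ball 0 1) := by
          rw [Finset.sum_const, nsmul_eq_mul]
    _ = ∑ x ∈ s, μ (closedBall x (r/4)) := by
          exact Finset.sum_congr rfl fun x _ => (hballmeas x).symm
    _ = μ (⋃ x ∈ s, closedBall x (r/4)) := hsum
    _ ≤ μ (closedBall c (ρ + r/2)) := measure_mono hsub
    _ = _ := hbig
  rw [← mul_assoc, ENNReal.mul_le_mul_iff_left hK0 hKtop] at hle
  have : ENNReal.ofReal ((s.card : ℝ) * (r/4)^n) ≤ ENNReal.ofReal ((ρ + r/2)^n) := by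
    calc ENNReal.ofReal ((s.card : ℝ) * (r/4)^n)
        = (s.card : ℝ≥0∞) * ENNReal.ofReal ((r/4)^n) := by
          rw [ENNReal.ofReal_mul (by positivity), ENNReal.ofReal_natCast]
    _ ≤ _ := hle
  exact (ENNReal.ofReal_le_ofReal_iff (by positivity)).mp this


lemma exists_exp_beats (C : ℝ) (hC : 0 < C) (n : ℕ) :
    ∃ m : ℕ, 3 ≤ m ∧ (C * ((m:ℝ)+3))^n < (2:ℝ)^m := by
  have htend : Filter.Tendsto (fun m : ℕ => (m:ℝ)^n * (1/2)^m) Filter.atTop (nhds 0) :=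
    (summable_pow_mul_geometric_of_norm_lt_one n
      (by rw [Real.norm_eq_abs]; rw [abs_of_pos]; norm_num; norm_num : ‖(1/2 : ℝ)‖ < 1)).tendsto_atTop_zero
  have hK : (0:ℝ) < (1/(2*C))^n := by positivity
  have hev : ∀ᶠ m : ℕ in Filter.atTop, (m:ℝ)^n * (1/2)^m < (1/(2*C))^n :=
    htend.eventually_lt_const hK
  obtain ⟨m, hm3, hm⟩ := ((Filter.eventually_ge_atTop 3).and hev).exists
  refine ⟨m, hm3, ?_⟩
  have h2m : (0:ℝ) < 2^m := by positivity
  have hmn : (m:ℝ)^n < (1/(2*C))^n * 2^m := by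
    have : (1/2:ℝ)^m = 1/2^m := by rw [div_pow]; norm_num
    rw [this] at hm
    calc (m:ℝ)^n = (m:ℝ)^n * (1/2^m) * 2^m := by field_simp
    _ < (1/(2*C))^n * 2^m := by exact mul_lt_mul_of_pos_right hm h2m
  have hbase : C * ((m:ℝ)+3) ≤ 2*C*(m:ℝ) := by
    have : (3:ℝ) ≤ (m:ℝ) := by exact_mod_cast hm3
    nlinarith
  calc (C * ((m:ℝ)+3))^n ≤ (2*C*(m:ℝ))^n :=
        pow_le_pow_left₀ (by positivity) hbase n
  _ = (2*C)^n * (m:ℝ)^n := by rw [mul_pow]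
  _ < (2*C)^n * ((1/(2*C))^n * 2^m) := by
        exact mul_lt_mul_of_pos_left hmn (by positivity)
  _ = ((2*C) * (1/(2*C)))^n * 2^m := by rw [← mul_assoc, ← mul_pow]
  _ = 2^m := by
        rw [mul_one_div, div_self (by positivity : (2*C) ≠ 0), one_pow, one_mul]

lemma hausdorffDist_le_R {R : ℝ} (hR : 0 ≤ R) {A B : Set ℝ}
    (hA : A ⊆ Set.Icc 0 R) (hB : B ⊆ Set.Icc 0 R)
    (hAne : A.Nonempty) (hBne : B.Nonempty) : hausdorffDist A B ≤ R := by
  apply hausdorffDist_le_of_mem_dist hR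
  · intro x hx
    obtain ⟨y, hy⟩ := hBne
    refine ⟨y, hy, ?_⟩
    have h1 := hA hx; have h2 := hB hy
    rw [Real.dist_eq, abs_le]
    exact ⟨by linarith [h1.1, h2.2], by linarith [h1.2, h2.1]⟩
  · intro y hy
    obtain ⟨x, hx⟩ := hAne
    refine ⟨x, hx, ?_⟩
    have h1 := hA hx; have h2 := hB hy
    rw [Real.dist_eq, abs_le]
    exact ⟨by linarith [h2.1, h1.2], by linarith [h2.2, h1.1]⟩

theorem EH_bounded_not_biLipschitz_embeddable (R : ℝ) (hR : 0 < R) (n : ℕ) :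
    ¬ ∃ (ψ : {A : Set ℝ // A.Finite ∧ A.Nonempty ∧ A ⊆ Set.Icc 0 R} →
          EuclideanSpace ℝ (Fin n)) (a b : ℝ), 0 < a ∧ 0 < b ∧
        ∀ X Y : {A : Set ℝ // A.Finite ∧ A.Nonempty ∧ A ⊆ Set.Icc 0 R},
          a * dEH X.val Y.val ≤ ‖ψ X - ψ Y‖ ∧ ‖ψ X - ψ Y‖ ≤ b * dEH X.val Y.val := by
  rintro ⟨ψ, a, b, ha, hb, hψ⟩
  classical
  obtain ⟨m, hm3, hmlt⟩ := exists_exp_beats (8*(a+b)/a) (by positivity) n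
  have hm3' : (0:ℝ) < (m:ℝ)+3 := by positivity
  set δ := R / ((m:ℝ)+3) with hδdef
  have hδ : 0 < δ := by positivity
  have hδR : δ ≤ R := by
    rw [hδdef, div_le_iff₀ hm3']; nlinarith
  set Φ : Finset ℕ → {A : Set ℝ // A.Finite ∧ A.Nonempty ∧ A ⊆ Set.Icc 0 R} :=
    fun u => ⟨gridSet R m (u ∩ Finset.range m),
      gridSet_finite _ _ _, gridSet_nonempty _ _ _,
      gridSet_subset hR Finset.inter_subset_right⟩ with hΦ
  have hsep : ∀ u v : Finset ℕ, u ⊆ Finset.range m → v ⊆ Finset.range m → u ≠ v →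
      a * (δ/2) ≤ dist (ψ (Φ u)) (ψ (Φ v)) := by
    intro u v hu hv huv
    have h1 := (hψ (Φ u) (Φ v)).1
    have hlow : δ/2 ≤ dEH (Φ u).val (Φ v).val := by
      have hne : (u ∩ Finset.range m) ≠ (v ∩ Finset.range m) := by
        rw [Finset.inter_eq_left.mpr hu, Finset.inter_eq_left.mpr hv]; exact huv
      have := grid_dEH_lower hR (u := u ∩ Finset.range m) (v := v ∩ Finset.range m)
        Finset.inter_subset_right Finset.inter_subset_right hne
      simpa [hΦ, hδdef] using this
    rw [dist_eq_norm]
    calc a * (δ/2) ≤ a * dEH (Φ u).val (Φ v).val := by nlinarith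
    _ ≤ ‖ψ (Φ u) - ψ (Φ v)‖ := h1
  have hdEH_le : ∀ u v : Finset ℕ, dEH (Φ u).val (Φ v).val ≤ R := by
    intro u v
    calc dEH (Φ u).val (Φ v).val ≤ hausdorffDist (Φ u).val (Φ v).val :=
          dEH_le_hausdorffDist _ _
    _ ≤ R := hausdorffDist_le_R hR.le (Φ u).prop.2.2 (Φ v).prop.2.2
          (Φ u).prop.2.1 (Φ v).prop.2.1
  have hdiam : ∀ u : Finset ℕ, dist (ψ (Φ u)) (ψ (Φ ∅)) ≤ b * R := by
    intro u
    rw [dist_eq_norm]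
    calc ‖ψ (Φ u) - ψ (Φ ∅)‖ ≤ b * dEH (Φ u).val (Φ ∅).val := (hψ (Φ u) (Φ ∅)).2
    _ ≤ b * R := by nlinarith [hdEH_le u ∅]
  have hinj : Set.InjOn (fun u => ψ (Φ u)) ↑(Finset.range m).powerset := by
    intro u hu v hv huv
    by_contra hne
    have h := hsep u v (Finset.mem_powerset.mp hu) (Finset.mem_powerset.mp hv) hne
    rw [show ψ (Φ u) = ψ (Φ v) from huv, dist_self] at h
    nlinarith
  set S := (Finset.range m).powerset.image (fun u => ψ (Φ u)) with hS
  have hcard : (S.card : ℝ) = 2^m := by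
    rw [hS, Finset.card_image_of_injOn hinj, Finset.card_powerset, Finset.card_range]
    push_cast; ring
  have hpack : (S.card : ℝ) * ((a*(δ/2))/4)^n ≤ (b*R + (a*(δ/2))/2)^n := by
    apply packing_bound n S (a*(δ/2)) (b*R) (by positivity) (by positivity) (ψ (Φ ∅))
    · intro x hx
      obtain ⟨u, hu, rfl⟩ := Finset.mem_image.mp hx
      exact hdiam u
    · intro x hx y hy hxy
      obtain ⟨u, hu, rfl⟩ := Finset.mem_image.mp hx
      obtain ⟨v, hv, rfl⟩ := Finset.mem_image.mp hy
      have huv : u ≠ v := fun h => hxy (by rw [h])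
      exact hsep u v (Finset.mem_powerset.mp hu) (Finset.mem_powerset.mp hv) huv
  -- numeric contradiction
  have hq : (0:ℝ) < (a*(δ/2))/4 := by positivity
  have hstep1 : (b*R + (a*(δ/2))/2)^n ≤ ((a+b)*R)^n := by
    apply pow_le_pow_left₀ (by positivity)
    nlinarith
  have hfact : ((a+b)*R)^n = (8*(a+b)/a*((m:ℝ)+3))^n * ((a*(δ/2))/4)^n := by
    rw [← mul_pow]
    congr 1
    rw [hδdef]
    field_simp
    ring
  have h2m : (0:ℝ) < 2^m := by positivity
  have : (2:ℝ)^m * ((a*(δ/2))/4)^n ≤ (8*(a+b)/a*((m:ℝ)+3))^n * ((a*(δ/2))/4)^n := by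
    calc (2:ℝ)^m * ((a*(δ/2))/4)^n = (S.card : ℝ) * ((a*(δ/2))/4)^n := by rw [hcard]
    _ ≤ (b*R + (a*(δ/2))/2)^n := hpack
    _ ≤ ((a+b)*R)^n := hstep1
    _ = _ := hfact
  have hqn : (0:ℝ) < ((a*(δ/2))/4)^n := by positivity
  nlinarith [hmlt, hqn, this]
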